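/- Let H be a Hopf algebra over a field k and Λ ∈ H. Then the element η := Σ S(Λ₍₁₎) ⊗ Λ₍₂₎ − S(Λ) ⊗ 1 − 1 ⊗ Λ + ε(Λ) 1 ⊗ 1 lies in ker ε ⊗ ker ε (i.e. (ε ⊗ id)(η) = 0 and (id ⊗ ε)(η) = 0), and η is invariant under the tensor product of the left coactions v ↦ Δv − v ⊗ 1: defining β̂ : H ⊗ H → H ⊗ H ⊗ H on simple tensors by β̂(v ⊗ w) = Σ v₍₁₎ w₍₁₎ ⊗ v₍₂₎ ⊗ w₍₂₎ − Σ v₍₁₎ w ⊗ v₍₂₎ ⊗ 1 − Σ v w₍₁₎ ⊗ 1 ⊗ w₍₂₎ + v w ⊗ 1 ⊗ 1, one has β̂(η) = 1 ⊗ η. -/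

import Mathlib

open TensorProduct

noncomputable section

variable {k H : Type*} [Field k] [Ring H] [HopfAlgebra k H]

/-- The left coaction `β(v) = Δv − v ⊗ 1`. -/
noncomputable def beta : H →ₗ[k] H ⊗[k] H :=
  Coalgebra.comul (R := k) (A := H) - (TensorProduct.mk k H H).flip 1

/-- `β̂(v ⊗ w) = Σ v₍₁₎ w₍₁₎ ⊗ v₍₂₎ ⊗ w₍₂₎ − Σ v₍₁₎ w ⊗ v₍₂₎ ⊗ 1 − Σ v w₍₁₎ ⊗ 1 ⊗ w₍₂₎
  + v w ⊗ 1 ⊗ 1`, the tensor product of the two coactions `β`. -/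
noncomputable def betaHat : H ⊗[k] H →ₗ[k] H ⊗[k] (H ⊗[k] H) :=
  (LinearMap.mul' k H).rTensor (H ⊗[k] H)
    ∘ₗ (TensorProduct.tensorTensorTensorComm k H H H H).toLinearMap
    ∘ₗ TensorProduct.map beta beta

/-- The element `η = Σ S(Λ₍₁₎) ⊗ Λ₍₂₎ − S(Λ) ⊗ 1 − 1 ⊗ Λ + ε(Λ) 1 ⊗ 1`. -/
noncomputable def etaElt (Λ : H) : H ⊗[k] H :=
  (HopfAlgebra.antipode (R := k) (A := H)).rTensor H (Coalgebra.comul Λ)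
    - (HopfAlgebra.antipode (R := k) (A := H) Λ) ⊗ₜ[k] (1 : H)
    - (1 : H) ⊗ₜ[k] Λ
    + (Coalgebra.counit (R := k) Λ) • ((1 : H) ⊗ₜ[k] (1 : H))

/-!
Write `q = (S ⊗ id) ∘ Δ`, so that `q Λ` is the leading term of `η`. The counit identities
follow from `ε ∘ S = ε` and the counit axioms. For the coaction, `β 1 = 0` makes `β̂` vanish on
`v ⊗ 1` and `1 ⊗ w`, so `β̂ η = β̂ (q Λ)`; and `β̂ ∘ q` is the convolution product
`(j₁ ∘ β ∘ S) ⋆ (j₂ ∘ β)` of maps `H → H ⊗ H ⊗ H`, where `j₁ (a ⊗ b) = a ⊗ b ⊗ 1` and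
`j₂ (a ⊗ b) = a ⊗ 1 ⊗ b` are algebra maps. Expanding `β = Δ - (· ⊗ 1)` leaves four convolution
products. Each is computed in the convolution algebra from `S ⋆ id = id ⋆ S = 1` and the fact that,
by coassociativity, convolving against a map into one tensor factor commutes with `Δ`. The main
term `(j₁ ∘ Δ ∘ S) ⋆ (j₂ ∘ Δ) = 1 ⊗ q` follows from `j₂ ∘ Δ = (j₁ ∘ Δ) ⋆ (1 ⊗ q)` and
`(Δ ∘ S) ⋆ Δ = Δ ∘ (S ⋆ id) = 1`.
-/

open Coalgebra HopfAlgebra WithConv LinearMap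
open Algebra.TensorProduct (includeLeft includeRight)

section Convolution

variable {R C B : Type*} [CommSemiring R] [AddCommMonoid C] [Module R C] [Coalgebra R C]
  [Semiring B] [Algebra R B]

lemma rTensor_convOne_comp_comul :
    (1 : WithConv (C →ₗ[R] B)).ofConv.rTensor C ∘ₗ comul = TensorProduct.mk R B C 1 := by
  ext c
  rw [LinearMap.convOne_def, ofConv_toConv, comp_apply, rTensor_comp_apply,
    rTensor_counit_comul]
  simp

lemma lTensor_convOne_comp_comul :
    (1 : WithConv (C →ₗ[R] B)).ofConv.lTensor C ∘ₗ comul = (TensorProduct.mk R C B).flip 1 := by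
  ext c
  rw [LinearMap.convOne_def, ofConv_toConv, comp_apply, lTensor_comp_apply,
    lTensor_counit_comul]
  simp

lemma algHom_comp_ofConv_one {B' : Type*} [Semiring B'] [Algebra R B'] (h : B →ₐ[R] B') :
    h.toLinearMap ∘ₗ (1 : WithConv (C →ₗ[R] B)).ofConv = (1 : WithConv (C →ₗ[R] B')).ofConv := by
  ext; simp

lemma toConv_algHom_comp_convMul {B' : Type*} [Semiring B'] [Algebra R B'] (h : B →ₐ[R] B')
    (f g : C →ₗ[R] B) :
    toConv (h.toLinearMap ∘ₗ f) * toConv (h.toLinearMap ∘ₗ g) =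
      toConv (h.toLinearMap ∘ₗ (toConv f * toConv g).ofConv) :=
  congr(toConv $(algHom_comp_convMul_distrib h (toConv f) (toConv g))).symm

end Convolution

section Bialgebra

variable {R C A : Type*} [CommSemiring R] [Semiring C] [Bialgebra R C] [Semiring A] [Algebra R A]

lemma lTensor_comp_comul_convMul_includeRight_comp (f g : C →ₗ[R] A) :
    toConv (f.lTensor C ∘ₗ comul) * toConv ((includeRight : A →ₐ[R] C ⊗[R] A).toLinearMap ∘ₗ g) =
      toConv ((toConv f * toConv g).ofConv.lTensor C ∘ₗ comul) := by
  have hmul : mul' R (C ⊗[R] A) ∘ₗ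
      map (f.lTensor C ∘ₗ comul) ((includeRight : A →ₐ[R] C ⊗[R] A).toLinearMap ∘ₗ g) =
      (mul' R A ∘ₗ map f g).lTensor C ∘ₗ (TensorProduct.assoc R C C C).toLinearMap ∘ₗ
        comul.rTensor C := by
    refine TensorProduct.ext' fun a b => ?_
    simp only [comp_apply, map_tmul, rTensor_tmul, LinearEquiv.coe_coe]
    induction (comul (R := R) a) using TensorProduct.induction_on with
    | zero => simp
    | tmul c d => simp
    | add s t hs ht => simp_all [add_tmul]
  apply WithConv.ext
  simp only [LinearMap.convMul_def, ofConv_toConv]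
  rw [← comp_assoc, hmul, comp_assoc, comp_assoc, coassoc, ← comp_assoc, ← lTensor_comp,
    comp_assoc]

lemma includeLeft_comp_convMul_rTensor_comp_comul (f g : C →ₗ[R] A) :
    toConv ((includeLeft : A →ₐ[R] A ⊗[R] C).toLinearMap ∘ₗ f) * toConv (g.rTensor C ∘ₗ comul) =
      toConv ((toConv f * toConv g).ofConv.rTensor C ∘ₗ comul) := by
  have hmul : mul' R (A ⊗[R] C) ∘ₗ
      map ((includeLeft : A →ₐ[R] A ⊗[R] C).toLinearMap ∘ₗ f) (g.rTensor C ∘ₗ comul) =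
      (mul' R A ∘ₗ map f g).rTensor C ∘ₗ (TensorProduct.assoc R C C C).symm.toLinearMap ∘ₗ
        comul.lTensor C := by
    refine TensorProduct.ext' fun a b => ?_
    simp only [comp_apply, map_tmul, lTensor_tmul, LinearEquiv.coe_coe]
    induction (comul (R := R) b) using TensorProduct.induction_on with
    | zero => simp
    | tmul c d => simp
    | add s t hs ht => simp_all [tmul_add]
  apply WithConv.ext
  simp only [LinearMap.convMul_def, ofConv_toConv]
  rw [← comp_assoc, hmul, comp_assoc, comp_assoc, coassoc_symm, ← comp_assoc, ← rTensor_comp,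
    comp_assoc]

end Bialgebra

section Hopf

variable {R A : Type*} [CommSemiring R] [Semiring A] [HopfAlgebra R A]

lemma comul_comp_antipode_convMul_comul :
    toConv (comul ∘ₗ antipode R (A := A)) * toConv comul = 1 := by
  have h := algHom_comp_convMul_distrib (Bialgebra.comulAlgHom R A) (toConv (antipode R))
    (toConv LinearMap.id)
  rw [antipode_mul_id, algHom_comp_convOne] at h
  exact (congr(toConv $h)).symm

lemma includeLeft_comp_antipode_convMul_comul :
    toConv ((includeLeft : A →ₐ[R] A ⊗[R] A).toLinearMap ∘ₗ antipode R) * toConv comul =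
      toConv (includeRight : A →ₐ[R] A ⊗[R] A).toLinearMap := by
  have h := includeLeft_comp_convMul_rTensor_comp_comul (antipode R (A := A)) LinearMap.id
  rwa [rTensor_id, id_comp, toConv_ofConv, antipode_mul_id, rTensor_convOne_comp_comul] at h

lemma includeLeft_convMul_rTensor_antipode_comp_comul :
    toConv (includeLeft : A →ₐ[R] A ⊗[R] A).toLinearMap *
        toConv ((antipode R).rTensor A ∘ₗ comul) =
      toConv (includeRight : A →ₐ[R] A ⊗[R] A).toLinearMap := by
  have h := includeLeft_comp_convMul_rTensor_comp_comul LinearMap.id (antipode R (A := A))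
  rwa [comp_id, toConv_ofConv, id_mul_antipode, rTensor_convOne_comp_comul] at h

lemma includeLeft_comp_antipode_convMul_includeLeft :
    toConv ((includeLeft : A →ₐ[R] A ⊗[R] A).toLinearMap ∘ₗ antipode R) *
      toConv (includeLeft : A →ₐ[R] A ⊗[R] A).toLinearMap = 1 := by
  have h := toConv_algHom_comp_convMul (includeLeft : A →ₐ[R] A ⊗[R] A) (antipode R) .id
  rwa [comp_id, toConv_ofConv, antipode_mul_id, algHom_comp_ofConv_one, toConv_ofConv] at h

lemma comul_convMul_includeRight_comp_antipode :
    toConv (comul (R := R) (A := A)) *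
        toConv ((includeRight : A →ₐ[R] A ⊗[R] A).toLinearMap ∘ₗ antipode R) =
      toConv (includeLeft : A →ₐ[R] A ⊗[R] A).toLinearMap := by
  have h := lTensor_comp_comul_convMul_includeRight_comp LinearMap.id (antipode R (A := A))
  rwa [lTensor_id, id_comp, toConv_ofConv, id_mul_antipode, lTensor_convOne_comp_comul] at h

lemma comul_comp_antipode_convMul_includeLeft :
    toConv (comul ∘ₗ antipode R (A := A)) * toConv (includeLeft : A →ₐ[R] A ⊗[R] A).toLinearMap =
      toConv ((includeRight : A →ₐ[R] A ⊗[R] A).toLinearMap ∘ₗ antipode R) := by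
  rw [← comul_convMul_includeRight_comp_antipode, ← mul_assoc, comul_comp_antipode_convMul_comul,
    one_mul]

lemma lTensor_includeLeft_comp_comul_comp_antipode_convMul :
    toConv ((Algebra.TensorProduct.lTensor A (includeLeft : A →ₐ[R] A ⊗[R] A)).toLinearMap ∘ₗ
        comul ∘ₗ antipode R) *
      toConv ((Algebra.TensorProduct.lTensor A (includeRight : A →ₐ[R] A ⊗[R] A)).toLinearMap ∘ₗ
        comul) =
      toConv ((includeRight : A ⊗[R] A →ₐ[R] A ⊗[R] (A ⊗[R] A)).toLinearMap ∘ₗ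
        (antipode R).rTensor A ∘ₗ comul) := by
  have hW : toConv ((Algebra.TensorProduct.lTensor A
          (includeLeft : A →ₐ[R] A ⊗[R] A)).toLinearMap ∘ₗ comul) *
        toConv ((includeRight : A ⊗[R] A →ₐ[R] A ⊗[R] (A ⊗[R] A)).toLinearMap ∘ₗ
          (antipode R).rTensor A ∘ₗ comul) =
      toConv ((Algebra.TensorProduct.lTensor A
        (includeRight : A →ₐ[R] A ⊗[R] A)).toLinearMap ∘ₗ comul) := by
    have h := lTensor_comp_comul_convMul_includeRight_comp
      (includeLeft : A →ₐ[R] A ⊗[R] A).toLinearMap ((antipode R).rTensor A ∘ₗ comul)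
    rwa [toConv_ofConv, includeLeft_convMul_rTensor_antipode_comp_comul, ofConv_toConv] at h
  rw [← hW, ← mul_assoc, toConv_algHom_comp_convMul, comul_comp_antipode_convMul_comul,
    algHom_comp_ofConv_one, toConv_ofConv, one_mul]

end Hopf

lemma beta_eq_comul_sub_includeLeft :
    (beta : H →ₗ[k] H ⊗[k] H) = comul - (includeLeft : H →ₐ[k] H ⊗[k] H).toLinearMap :=
  rfl

lemma beta_one : (beta : H →ₗ[k] H ⊗[k] H) 1 = 0 := by
  simp [beta, Algebra.TensorProduct.one_def]

lemma betaHat_tmul (v w : H) :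
    betaHat (v ⊗ₜ[k] w) =
      Algebra.TensorProduct.lTensor (S := k) H (includeLeft : H →ₐ[k] H ⊗[k] H) (beta v) *
        Algebra.TensorProduct.lTensor (S := k) H (includeRight : H →ₐ[k] H ⊗[k] H) (beta w) := by
  have hΦ : (LinearMap.mul' k H).rTensor (H ⊗[k] H) ∘ₗ
        (tensorTensorTensorComm k H H H H).toLinearMap =
      mul' k (H ⊗[k] (H ⊗[k] H)) ∘ₗ
        map (Algebra.TensorProduct.lTensor (S := k) H (includeLeft : H →ₐ[k] H ⊗[k] H)).toLinearMap
          (Algebra.TensorProduct.lTensor (S := k) H (includeRight : H →ₐ[k] H ⊗[k] H)).toLinearMap := by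
    apply TensorProduct.ext_fourfold'
    intro a b c d
    simp [Algebra.TensorProduct.tmul_mul_tmul]
  simpa only [betaHat, comp_apply, map_tmul, mul'_apply, AlgHom.toLinearMap_apply,
    LinearEquiv.coe_coe] using congr($hΦ (beta v ⊗ₜ[k] beta w))

lemma betaHat_tmul_one (v : H) : betaHat (v ⊗ₜ[k] (1 : H)) = 0 := by
  rw [betaHat_tmul, beta_one, map_zero, mul_zero]

lemma betaHat_one_tmul (w : H) : betaHat ((1 : H) ⊗ₜ[k] w) = 0 := by
  rw [betaHat_tmul, beta_one, map_zero, zero_mul]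

lemma betaHat_comp_rTensor_antipode_comp_comul :
    betaHat ∘ₗ (antipode k).rTensor H ∘ₗ comul =
      (toConv ((Algebra.TensorProduct.lTensor (S := k) H
          (includeLeft : H →ₐ[k] H ⊗[k] H)).toLinearMap ∘ₗ beta ∘ₗ antipode k) *
        toConv ((Algebra.TensorProduct.lTensor (S := k) H
          (includeRight : H →ₐ[k] H ⊗[k] H)).toLinearMap ∘ₗ beta)).ofConv := by
  have h : betaHat ∘ₗ (antipode k).rTensor H = mul' k _ ∘ₗ
      map ((Algebra.TensorProduct.lTensor (S := k) H
          (includeLeft : H →ₐ[k] H ⊗[k] H)).toLinearMap ∘ₗ beta ∘ₗ antipode k)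
        ((Algebra.TensorProduct.lTensor (S := k) H
          (includeRight : H →ₐ[k] H ⊗[k] H)).toLinearMap ∘ₗ beta) :=
    TensorProduct.ext' fun v w => by
      simp only [comp_apply, rTensor_tmul, betaHat_tmul, map_tmul, mul'_apply,
        AlgHom.toLinearMap_apply]
  rw [LinearMap.convMul_def, ofConv_toConv, ← comp_assoc, h, comp_assoc]

lemma lTensor_includeLeft_comp_beta_comp_antipode_convMul :
    toConv ((Algebra.TensorProduct.lTensor (S := k) H
          (includeLeft : H →ₐ[k] H ⊗[k] H)).toLinearMap ∘ₗ beta ∘ₗ antipode k) *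
        toConv ((Algebra.TensorProduct.lTensor (S := k) H
          (includeRight : H →ₐ[k] H ⊗[k] H)).toLinearMap ∘ₗ beta) =
      toConv ((includeRight : H ⊗[k] H →ₐ[k] H ⊗[k] (H ⊗[k] H)).toLinearMap ∘ₗ
          ((antipode k).rTensor H ∘ₗ comul -
            (includeLeft : H →ₐ[k] H ⊗[k] H).toLinearMap ∘ₗ antipode k -
            (includeRight : H →ₐ[k] H ⊗[k] H).toLinearMap)) + 1 := by
  set j₁ := Algebra.TensorProduct.lTensor (S := k) H (includeLeft : H →ₐ[k] H ⊗[k] H)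
  set j₂ := Algebra.TensorProduct.lTensor (S := k) H (includeRight : H →ₐ[k] H ⊗[k] H)
  set ι₁ := (includeLeft : H →ₐ[k] H ⊗[k] H).toLinearMap
  set ι₂ := (includeRight : H →ₐ[k] H ⊗[k] H).toLinearMap
  set ι := (includeRight : H ⊗[k] H →ₐ[k] H ⊗[k] (H ⊗[k] H)).toLinearMap
  have hj : j₂.toLinearMap ∘ₗ ι₁ = j₁.toLinearMap ∘ₗ ι₁ := LinearMap.ext fun _ => rfl
  have hT₂ : toConv (j₁.toLinearMap ∘ₗ comul ∘ₗ antipode k) * toConv (j₂.toLinearMap ∘ₗ ι₁) =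
      toConv (ι ∘ₗ ι₁ ∘ₗ antipode k) := by
    rw [hj, toConv_algHom_comp_convMul, comul_comp_antipode_convMul_includeLeft, ofConv_toConv]
    rfl
  have hT₃ : toConv (j₁.toLinearMap ∘ₗ ι₁ ∘ₗ antipode k) * toConv (j₂.toLinearMap ∘ₗ comul) =
      toConv (ι ∘ₗ ι₂) := by
    rw [← comp_assoc, ← hj, comp_assoc, toConv_algHom_comp_convMul,
      includeLeft_comp_antipode_convMul_comul, ofConv_toConv]
    rfl
  have hT₄ : toConv (j₁.toLinearMap ∘ₗ ι₁ ∘ₗ antipode k) * toConv (j₂.toLinearMap ∘ₗ ι₁) = 1 := by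
    rw [hj, toConv_algHom_comp_convMul, includeLeft_comp_antipode_convMul_includeLeft,
      algHom_comp_ofConv_one, toConv_ofConv]
  rw [beta_eq_comul_sub_includeLeft, sub_comp, comp_sub, comp_sub, toConv_sub, toConv_sub,
    sub_mul, mul_sub, mul_sub, lTensor_includeLeft_comp_comul_comp_antipode_convMul, hT₂, hT₃, hT₄,
    comp_sub, comp_sub, toConv_sub, toConv_sub]
  abel

lemma betaHat_etaElt (Λ : H) : betaHat (etaElt Λ) = (1 : H) ⊗ₜ[k] etaElt Λ := by
  have hq := congr($(betaHat_comp_rTensor_antipode_comp_comul (k := k) (H := H)) Λ)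
  rw [lTensor_includeLeft_comp_beta_comp_antipode_convMul] at hq
  rw [etaElt, map_add, map_sub, map_sub, map_smul, betaHat_tmul_one, betaHat_one_tmul,
    betaHat_one_tmul, smul_zero, sub_zero, sub_zero, add_zero]
  simp only [comp_apply] at hq
  rw [hq]
  simp [tmul_add, Algebra.algebraMap_eq_smul_one, Algebra.TensorProduct.one_def]

lemma rTensor_counit_etaElt (Λ : H) : (counit (R := k) (A := H)).rTensor H (etaElt Λ) = 0 := by
  rw [etaElt, map_add, map_sub, map_sub, map_smul, ← rTensor_comp_apply, counit_comp_antipode,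
    rTensor_counit_comul]
  simp [smul_tmul', Bialgebra.counit_one]

lemma lTensor_counit_etaElt (Λ : H) : (counit (R := k) (A := H)).lTensor H (etaElt Λ) = 0 := by
  rw [etaElt, map_add, map_sub, map_sub, map_smul, ← comp_apply, lTensor_comp_rTensor,
    ← rTensor_comp_lTensor, comp_apply, lTensor_counit_comul]
  simp [← tmul_smul, Bialgebra.counit_one]

/-- `η` lies in `ker ε ⊗ ker ε` (i.e. `(ε ⊗ id)η = 0` and `(id ⊗ ε)η = 0`)
and is invariant under the tensor product coaction `β̂`: `β̂(η) = 1 ⊗ η`. -/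
theorem statement8 (Λ : H) :
    (Coalgebra.counit (R := k) (A := H)).rTensor H (etaElt Λ) = 0
    ∧ (Coalgebra.counit (R := k) (A := H)).lTensor H (etaElt Λ) = 0
    ∧ betaHat (etaElt Λ) = (1 : H) ⊗ₜ[k] etaElt Λ :=
  ⟨rTensor_counit_etaElt Λ, lTensor_counit_etaElt Λ, betaHat_etaElt Λ⟩
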